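/- arXiv:1902.02235 — 2 statements merged into one kernel-verified Lean document; each statement's English description precedes it below -/
import Mathlib

section
/- Let X = φ⁻¹(0) and Y = ψ⁻¹(0) where φ, ψ : ℝ³ → ℝ are homogeneous polynomials of positive degree, and suppose the links X ∩ S² and Y ∩ S²_R (for some R > 0) are bi-Lipschitz homeomorphic with respect to the Euclidean metric. Then X and Y are bi-Lipschitz homeomorphic with respect to the Euclidean (outer) metric. -/
lemma cone_sq {E : Type*} [NormedAddCommGroup E] [InnerProductSpace ℝ E]
    (u v : E) (r : ℝ) (hu : ‖u‖ = r) (hv : ‖v‖ = r) (s t : ℝ) :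
    ‖s • u - t • v‖ ^ 2 = r ^ 2 * (s - t) ^ 2 + s * t * ‖u - v‖ ^ 2 := by
  have e1 := norm_sub_sq_real (s • u) (t • v)
  have e2 := norm_sub_sq_real u v
  simp only [norm_smul, real_inner_smul_left, real_inner_smul_right, hu, hv,
    Real.norm_eq_abs] at e1 e2
  have hs : |s| ^ 2 = s ^ 2 := sq_abs s
  have ht : |t| ^ 2 = t ^ 2 := sq_abs t
  linear_combination e1 - s * t * e2 + r ^ 2 * hs + r ^ 2 * ht

set_option maxHeartbeats 800000 in
theorem stmt_8 (φ ψ : EuclideanSpace ℝ (Fin 3) → ℝ) (d e : ℕ) (hd : 1 ≤ d) (he : 1 ≤ e)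
    (hφ : ∀ (t : ℝ) (v : EuclideanSpace ℝ (Fin 3)), φ (t • v) = t ^ d * φ v)
    (hψ : ∀ (t : ℝ) (v : EuclideanSpace ℝ (Fin 3)), ψ (t • v) = t ^ e * ψ v)
    (X Y : Set (EuclideanSpace ℝ (Fin 3)))
    (hX : X = φ ⁻¹' {0}) (hY : Y = ψ ⁻¹' {0})
    (R : ℝ) (hR : 0 < R)
    (HL : EuclideanSpace ℝ (Fin 3) → EuclideanSpace ℝ (Fin 3))
    (hbij : Set.BijOn HL (X ∩ Metric.sphere 0 1) (Y ∩ Metric.sphere 0 R))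
    (CL : ℝ) (hCL : 0 < CL)
    (hup : ∀ u ∈ X ∩ Metric.sphere (0 : EuclideanSpace ℝ (Fin 3)) 1,
      ∀ v ∈ X ∩ Metric.sphere (0 : EuclideanSpace ℝ (Fin 3)) 1,
        ‖HL u - HL v‖ ≤ CL * ‖u - v‖)
    (hlow : ∀ u ∈ X ∩ Metric.sphere (0 : EuclideanSpace ℝ (Fin 3)) 1,
      ∀ v ∈ X ∩ Metric.sphere (0 : EuclideanSpace ℝ (Fin 3)) 1,
        ‖u - v‖ ≤ CL * ‖HL u - HL v‖) :
    ∃ H : EuclideanSpace ℝ (Fin 3) → EuclideanSpace ℝ (Fin 3),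
      Set.BijOn H X Y ∧ ∃ C : ℝ, 0 < C ∧ ∀ p ∈ X, ∀ q ∈ X,
        ‖H p - H q‖ ≤ C * ‖p - q‖ ∧ ‖p - q‖ ≤ C * ‖H p - H q‖ := by
  have hdne : d ≠ 0 := Nat.one_le_iff_ne_zero.mp hd
  have hene : e ≠ 0 := Nat.one_le_iff_ne_zero.mp he
  have h0X : (0 : EuclideanSpace ℝ (Fin 3)) ∈ X := by
    have := hφ 0 0
    rw [smul_zero, zero_pow hdne, zero_mul] at this
    simp [hX, this]
  have h0Y : (0 : EuclideanSpace ℝ (Fin 3)) ∈ Y := by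
    have := hψ 0 0
    rw [smul_zero, zero_pow hene, zero_mul] at this
    simp [hY, this]
  have coneX : ∀ (t : ℝ), ∀ p ∈ X, t • p ∈ X := by
    intro t p hp
    rw [hX] at hp ⊢
    simp only [Set.mem_preimage, Set.mem_singleton_iff] at hp ⊢
    rw [hφ t p, hp, mul_zero]
  have coneY : ∀ (t : ℝ), ∀ p ∈ Y, t • p ∈ Y := by
    intro t p hp
    rw [hY] at hp ⊢
    simp only [Set.mem_preimage, Set.mem_singleton_iff] at hp ⊢
    rw [hψ t p, hp, mul_zero]
  have unit : ∀ p ∈ X, p ≠ 0 → ‖p‖⁻¹ • p ∈ X ∩ Metric.sphere 0 1 := by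
    intro p hp hp0
    refine ⟨coneX _ p hp, ?_⟩
    rw [mem_sphere_zero_iff_norm, norm_smul, norm_inv, norm_norm,
      inv_mul_cancel₀ (norm_ne_zero_iff.mpr hp0)]
  set H : EuclideanSpace ℝ (Fin 3) → EuclideanSpace ℝ (Fin 3) :=
    fun p => ‖p‖ • HL (‖p‖⁻¹ • p) with hHdef
  have Hval : ∀ p : EuclideanSpace ℝ (Fin 3), H p = ‖p‖ • HL (‖p‖⁻¹ • p) :=
    fun p => rfl
  have H0 : H 0 = 0 := by rw [Hval]; simp
  have normHL : ∀ u ∈ X ∩ Metric.sphere (0 : EuclideanSpace ℝ (Fin 3)) 1, ‖HL u‖ = R := by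
    intro u hu
    exact mem_sphere_zero_iff_norm.mp (hbij.mapsTo hu).2
  set C : ℝ := max R R⁻¹ + CL with hCdef
  have hC : 0 < C := by positivity
  have hCR : R ≤ C := le_add_of_le_of_nonneg (le_max_left _ _) hCL.le
  have hCRi : R⁻¹ ≤ C := le_add_of_le_of_nonneg (le_max_right _ _) hCL.le
  have hCCL : CL ≤ C := le_add_of_nonneg_left (le_max_of_le_left hR.le)
  have hCR1 : 1 ≤ C * R := by
    have := mul_le_mul_of_nonneg_right hCRi hR.le
    rwa [inv_mul_cancel₀ hR.ne'] at this
  have normH : ∀ p ∈ X, ‖H p‖ = R * ‖p‖ := by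
    intro p hp
    rcases eq_or_ne p 0 with rfl | hp0
    · simp [H0]
    · rw [Hval, norm_smul, norm_norm, normHL _ (unit p hp hp0), mul_comm]
  have main : ∀ p ∈ X, ∀ q ∈ X,
      ‖H p - H q‖ ≤ C * ‖p - q‖ ∧ ‖p - q‖ ≤ C * ‖H p - H q‖ := by
    have single : ∀ q ∈ X, ‖H q‖ ≤ C * ‖q‖ ∧ ‖q‖ ≤ C * ‖H q‖ := by
      intro q hq
      rw [normH q hq]
      constructor
      · nlinarith [norm_nonneg q]
      · nlinarith [norm_nonneg q, mul_le_mul_of_nonneg_right hCR1 (norm_nonneg q)]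
    intro p hp q hq
    rcases eq_or_ne p 0 with rfl | hp0
    · rw [H0]
      simpa [norm_sub_rev, norm_neg] using (single q hq)
    rcases eq_or_ne q 0 with rfl | hq0
    · rw [H0]
      simpa using (single p hp)
    -- both nonzero
    have hs0 : (0:ℝ) < ‖p‖ := norm_pos_iff.mpr hp0
    have ht0 : (0:ℝ) < ‖q‖ := norm_pos_iff.mpr hq0
    have huX : ‖p‖⁻¹ • p ∈ X ∩ Metric.sphere 0 1 := unit p hp hp0
    have hvX : ‖q‖⁻¹ • q ∈ X ∩ Metric.sphere 0 1 := unit q hq hq0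
    set u := ‖p‖⁻¹ • p
    set v := ‖q‖⁻¹ • q
    set s := ‖p‖
    set t := ‖q‖
    have hun : ‖u‖ = 1 := mem_sphere_zero_iff_norm.mp huX.2
    have hvn : ‖v‖ = 1 := mem_sphere_zero_iff_norm.mp hvX.2
    have hpu : p = s • u := (smul_inv_smul₀ hs0.ne' p).symm
    have hqv : q = t • v := (smul_inv_smul₀ ht0.ne' q).symm
    have hHp : H p = s • HL u := Hval p
    have hHq : H q = t • HL v := Hval q
    have e1 : ‖p - q‖ ^ 2 = 1 ^ 2 * (s - t) ^ 2 + s * t * ‖u - v‖ ^ 2 := by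
      nth_rewrite 1 [hpu, hqv]; exact cone_sq u v 1 hun hvn s t
    have e2 : ‖H p - H q‖ ^ 2 = R ^ 2 * (s - t) ^ 2 + s * t * ‖HL u - HL v‖ ^ 2 := by
      rw [hHp, hHq]; exact cone_sq (HL u) (HL v) R (normHL u huX) (normHL v hvX) s t
    have hw := hup u huX v hvX
    have hl := hlow u huX v hvX
    have hWn : (0:ℝ) ≤ ‖HL u - HL v‖ := norm_nonneg _
    have hwn : (0:ℝ) ≤ ‖u - v‖ := norm_nonneg _
    have hst : (0:ℝ) ≤ s * t := (mul_pos hs0 ht0).le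
    have hCLC : CL ^ 2 ≤ C ^ 2 := by nlinarith
    constructor
    · have hW2 : ‖HL u - HL v‖ ^ 2 ≤ C ^ 2 * ‖u - v‖ ^ 2 := by
        have t1 : ‖HL u - HL v‖ ^ 2 ≤ CL ^ 2 * ‖u - v‖ ^ 2 := by
          nlinarith [mul_self_le_mul_self hWn hw]
        have t2 : CL ^ 2 * ‖u - v‖ ^ 2 ≤ C ^ 2 * ‖u - v‖ ^ 2 :=
          mul_le_mul_of_nonneg_right hCLC (sq_nonneg _)
        linarith
      have hsq : ‖H p - H q‖ ^ 2 ≤ (C * ‖p - q‖) ^ 2 := by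
        rw [mul_pow, e1, e2]
        have hR2 : R ^ 2 ≤ C ^ 2 := by nlinarith
        nlinarith [mul_le_mul_of_nonneg_left hW2 hst,
          mul_le_mul_of_nonneg_right hR2 (sq_nonneg (s - t))]
      exact le_of_pow_le_pow_left₀ two_ne_zero (by positivity) hsq
    · have hw2 : ‖u - v‖ ^ 2 ≤ C ^ 2 * ‖HL u - HL v‖ ^ 2 := by
        have t1 : ‖u - v‖ ^ 2 ≤ CL ^ 2 * ‖HL u - HL v‖ ^ 2 := by
          nlinarith [mul_self_le_mul_self hwn hl]
        have t2 : CL ^ 2 * ‖HL u - HL v‖ ^ 2 ≤ C ^ 2 * ‖HL u - HL v‖ ^ 2 :=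
          mul_le_mul_of_nonneg_right hCLC (sq_nonneg _)
        linarith
      have hsq : ‖p - q‖ ^ 2 ≤ (C * ‖H p - H q‖) ^ 2 := by
        rw [mul_pow, e1, e2]
        have hCR2 : 1 ≤ C ^ 2 * R ^ 2 := by
          have h := mul_self_le_mul_self zero_le_one hCR1
          calc (1:ℝ) = 1 * 1 := (one_mul 1).symm
          _ ≤ (C * R) * (C * R) := h
          _ = C ^ 2 * R ^ 2 := by ring
        nlinarith [mul_le_mul_of_nonneg_left hw2 hst,
          mul_le_mul_of_nonneg_right hCR2 (sq_nonneg (s - t))]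
      exact le_of_pow_le_pow_left₀ two_ne_zero (by positivity) hsq
  refine ⟨H, ⟨?_, ?_, ?_⟩, C, hC, main⟩
  · intro p hp
    rcases eq_or_ne p 0 with rfl | hp0
    · rw [H0]; exact h0Y
    · rw [Hval]
      exact coneY _ _ (hbij.mapsTo (unit p hp hp0)).1
  · intro p hp q hq hEq
    have h2 := (main p hp q hq).2
    rw [hEq] at h2
    simp only [sub_self, norm_zero, mul_zero] at h2
    have : ‖p - q‖ = 0 := le_antisymm h2 (norm_nonneg _)
    rwa [norm_sub_eq_zero_iff] at this
  · intro y hy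
    rcases eq_or_ne y 0 with rfl | hy0
    · exact ⟨0, h0X, H0⟩
    · have hyn : (0:ℝ) < ‖y‖ := norm_pos_iff.mpr hy0
      have hwY : (R * ‖y‖⁻¹) • y ∈ Y ∩ Metric.sphere 0 R := by
        refine ⟨coneY _ y hy, ?_⟩
        rw [mem_sphere_zero_iff_norm, norm_smul, Real.norm_eq_abs,
          abs_of_pos (by positivity), mul_assoc, inv_mul_cancel₀ hyn.ne', mul_one]
      obtain ⟨u, huX, huw⟩ := hbij.surjOn hwY
      have hun : ‖u‖ = 1 := mem_sphere_zero_iff_norm.mp huX.2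
      have ha0 : (0:ℝ) < ‖y‖ * R⁻¹ := by positivity
      refine ⟨(‖y‖ * R⁻¹) • u, coneX _ u huX.1, ?_⟩
      have hnau : ‖(‖y‖ * R⁻¹) • u‖ = ‖y‖ * R⁻¹ := by
        rw [norm_smul, Real.norm_eq_abs, abs_of_pos ha0, hun, mul_one]
      rw [Hval, hnau, inv_smul_smul₀ ha0.ne', huw, smul_smul]
      have hone : ‖y‖ * R⁻¹ * (R * ‖y‖⁻¹) = 1 := by
        field_simp
      rw [hone, one_smul]
end

section
/- Let X ⊆ ℝⁿ be a cone over a compact set L ⊆ S^{n−1}, i.e. X = {t·u : t ≥ 0, u ∈ L}. Suppose L is path-connected and Lipschitz normally embedded in ℝⁿ. Then X is Lipschitz normally embedded: there exists k > 0 such that the inner distance in X between any two points is at most k times their Euclidean distance. -/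
/-- The inner (length) distance on a subset `X`: the infimum of lengths of
rectifiable paths inside `X` joining `x` to `y` (`∞` if there is none). -/
noncomputable def innerDist {E : Type*} [NormedAddCommGroup E]
    (X : Set E) (x y : E) : ENNReal :=
  sInf {l | ∃ γ : ℝ → E, Continuous γ ∧ (∀ t ∈ Set.Icc (0:ℝ) 1, γ t ∈ X) ∧
    γ 0 = x ∧ γ 1 = y ∧ l = eVariationOn γ (Set.Icc (0:ℝ) 1)}

/-!
For `t ≤ s` and `u, v ∈ L`, join `t • u` to `s • v` by the copy `t • γ` of a path `γ` from `u`
to `v` in `L`, followed by the radial segment from `t • v` to `s • v`. Scaling by `t` multiplies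
lengths by `t`, so the first part has length about `t k₀ ‖u - v‖`, and the second has length
`s - t`. Since `u` and `v` are unit vectors, `s - t ≤ ‖t • u - s • v‖` and
`t ‖u - v‖ ≤ 2 ‖t • u - s • v‖`, which gives the constant `2 k₀ + 1`.
-/

open Set

section InnerDist

variable {E F : Type*} [NormedAddCommGroup E] [NormedAddCommGroup F]
  {X : Set E} {Y : Set F} {x y z : E} {γ γ₁ γ₂ : ℝ → E}

def IsPathIn (X : Set E) (x y : E) (γ : ℝ → E) : Prop :=
  Continuous γ ∧ (∀ t ∈ Icc (0:ℝ) 1, γ t ∈ X) ∧ γ 0 = x ∧ γ 1 = y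

theorem innerDist_eq_iInf (X : Set E) (x y : E) :
    innerDist X x y = ⨅ γ : {γ // IsPathIn X x y γ}, eVariationOn γ.1 (Icc 0 1) := by
  rw [← sInf_range, innerDist]
  congr 1
  ext l
  simp [IsPathIn, eq_comm, and_assoc]

theorem innerDist_le_eVariationOn (h : IsPathIn X x y γ) :
    innerDist X x y ≤ eVariationOn γ (Icc 0 1) :=
  (innerDist_eq_iInf X x y).trans_le (iInf_le_of_le ⟨γ, h⟩ le_rfl)

theorem IsPathIn.reverse (h : IsPathIn X x y γ) : IsPathIn X y x (fun t ↦ γ (1 - t)) := by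
  obtain ⟨hc, hX, h0, h1⟩ := h
  refine ⟨hc.comp (by fun_prop), fun t ht ↦ hX _ ⟨by linarith [ht.2], by linarith [ht.1]⟩,
    by simpa using h1, by simpa using h0⟩

theorem eVariationOn_reverse (γ : ℝ → E) :
    eVariationOn (fun t ↦ γ (1 - t)) (Icc 0 1) = eVariationOn γ (Icc 0 1) := by
  have hanti : AntitoneOn (fun t : ℝ ↦ 1 - t) (Icc 0 1) := fun a _ b _ hab ↦ by
    simp only; linarith
  rw [← Function.comp_def, eVariationOn.comp_eq_of_antitoneOn γ _ hanti, image_const_sub_Icc]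
  norm_num

theorem innerDist_comm (X : Set E) (x y : E) : innerDist X x y = innerDist X y x := by
  suffices ∀ x y, innerDist X x y ≤ innerDist X y x from le_antisymm (this x y) (this y x)
  intro x y
  rw [innerDist_eq_iInf X y x]
  exact le_iInf fun ⟨γ, hγ⟩ ↦
    (innerDist_le_eVariationOn hγ.reverse).trans_eq (eVariationOn_reverse γ)

noncomputable def pathConcat (γ₁ γ₂ : ℝ → E) : ℝ → E :=
  fun t ↦ if t ≤ 1 / 2 then γ₁ (2 * t) else γ₂ (2 * t - 1)

theorem IsPathIn.concat (h₁ : IsPathIn X x y γ₁) (h₂ : IsPathIn X y z γ₂) :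
    IsPathIn X x z (pathConcat γ₁ γ₂) := by
  obtain ⟨hc₁, hX₁, h0₁, h1₁⟩ := h₁
  obtain ⟨hc₂, hX₂, h0₂, h1₂⟩ := h₂
  refine ⟨?_, fun t ht ↦ ?_, by norm_num [pathConcat, h0₁], by norm_num [pathConcat, h1₂]⟩
  · refine Continuous.if_le (hc₁.comp (by fun_prop)) (hc₂.comp (by fun_prop))
      continuous_id continuous_const fun t ht ↦ ?_
    subst ht
    norm_num [h1₁, h0₂]
  · unfold pathConcat
    split_ifs with h
    · exact hX₁ _ ⟨by linarith [ht.1], by linarith⟩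
    · exact hX₂ _ ⟨by linarith, by linarith [ht.2]⟩

theorem eVariationOn_pathConcat (h : γ₁ 1 = γ₂ 0) :
    eVariationOn (pathConcat γ₁ γ₂) (Icc 0 1) =
      eVariationOn γ₁ (Icc 0 1) + eVariationOn γ₂ (Icc 0 1) := by
  have hsplit := eVariationOn.Icc_add_Icc (pathConcat γ₁ γ₂) (s := univ)
    (by norm_num : (0:ℝ) ≤ 1 / 2) (by norm_num : (1 / 2 : ℝ) ≤ 1) (mem_univ _)
  simp only [univ_inter] at hsplit
  have hleft : EqOn (pathConcat γ₁ γ₂) (γ₁ ∘ fun t ↦ 2 * t + 0) (Icc 0 (1 / 2)) :=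
    fun t ht ↦ by simp only [pathConcat, if_pos ht.2, Function.comp_apply, add_zero]
  have hright : EqOn (pathConcat γ₁ γ₂) (γ₂ ∘ fun t ↦ 2 * t + -1) (Icc (1 / 2) 1) := by
    intro t ht
    rcases ht.1.eq_or_lt with rfl | hlt
    · norm_num [pathConcat, h]
    · simp only [pathConcat, if_neg (not_le.mpr hlt), Function.comp_apply, sub_eq_add_neg]
  have hmono (b : ℝ) (s : Set ℝ) : MonotoneOn (fun t : ℝ ↦ 2 * t + b) s :=
    fun _ _ _ _ hab ↦ by simp only; linarith
  rw [← hsplit, eVariationOn.eq_of_eqOn hleft, eVariationOn.eq_of_eqOn hright,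
    eVariationOn.comp_eq_of_monotoneOn _ _ (hmono _ _),
    eVariationOn.comp_eq_of_monotoneOn _ _ (hmono _ _),
    image_affine_Icc' two_pos, image_affine_Icc' two_pos]
  norm_num

theorem innerDist_triangle (X : Set E) (x y z : E) :
    innerDist X x z ≤ innerDist X x y + innerDist X y z := by
  rw [innerDist_eq_iInf X x y, innerDist_eq_iInf X y z]
  refine ENNReal.le_iInf_add_iInf fun ⟨γ₁, h₁⟩ ⟨γ₂, h₂⟩ ↦ ?_
  rw [← eVariationOn_pathConcat (h₁.2.2.2.trans h₂.2.2.1.symm)]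
  exact innerDist_le_eVariationOn (h₁.concat h₂)

theorem innerDist_image_le {f : E → F} {K : NNReal} (hf : LipschitzWith K f)
    (hXY : MapsTo f X Y) (hxy : innerDist X x y ≠ ⊤) :
    innerDist Y (f x) (f y) ≤ K * innerDist X x y := by
  rw [innerDist_eq_iInf X x y] at hxy ⊢
  have hne : Nonempty {γ // IsPathIn X x y γ} := by
    by_contra h
    simp [not_nonempty_iff.mp h] at hxy
  rw [ENNReal.mul_iInf (by simp)]
  refine le_iInf fun ⟨γ, hc, hX, h0, h1⟩ ↦ ?_
  calc innerDist Y (f x) (f y) ≤ eVariationOn (f ∘ γ) (Icc 0 1) :=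
        innerDist_le_eVariationOn
          ⟨hf.continuous.comp hc, fun t ht ↦ hXY (hX t ht), by simp [h0], by simp [h1]⟩
    _ ≤ K * eVariationOn γ (Icc 0 1) :=
        (hf.lipschitzOnWith (s := univ)).comp_eVariationOn_le (mapsTo_univ _ _)

theorem innerDist_le_edist_of_segment_subset [NormedSpace ℝ E] (h : segment ℝ x y ⊆ X) :
    innerDist X x y ≤ edist x y := by
  have hlip := lipschitzWith_lineMap (𝕜 := ℝ) x y
  have hpath : IsPathIn X x y (AffineMap.lineMap x y) :=
    ⟨hlip.continuous, fun t ht ↦ h (segment_eq_image_lineMap ℝ x y ▸ mem_image_of_mem _ ht),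
      AffineMap.lineMap_apply_zero x y, AffineMap.lineMap_apply_one x y⟩
  calc innerDist X x y ≤ eVariationOn (AffineMap.lineMap x y ∘ id) (Icc (0:ℝ) 1) :=
        innerDist_le_eVariationOn hpath
    _ ≤ nndist x y * eVariationOn id (Icc (0:ℝ) 1) :=
        (hlip.lipschitzOnWith (s := univ)).comp_eVariationOn_le (mapsTo_univ _ _)
    _ = nndist x y * ENNReal.ofReal (1 - 0) := by
        congr 1
        simpa only [inter_self, id_eq] using monotoneOn_id.eVariationOn_eq (s := Icc (0:ℝ) 1)
          (left_mem_Icc.mpr zero_le_one) (right_mem_Icc.mpr zero_le_one)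
    _ = edist x y := by rw [sub_zero, ENNReal.ofReal_one, mul_one, edist_nndist]

end InnerDist

section Cone

variable {E : Type*} [NormedAddCommGroup E] [NormedSpace ℝ E] {L : Set E} {u v : E} {s t : ℝ}

def cone (L : Set E) : Set E := {p | ∃ t : ℝ, 0 ≤ t ∧ ∃ u ∈ L, p = t • u}

theorem smul_mem_cone (ht : 0 ≤ t) (hu : u ∈ L) : t • u ∈ cone L := ⟨t, ht, u, hu, rfl⟩

theorem segment_smul_subset_cone (ht : 0 ≤ t) (hs : 0 ≤ s) (hv : v ∈ L) :
    segment ℝ (t • v) (s • v) ⊆ cone L := by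
  rintro _ ⟨a, b, ha, hb, -, rfl⟩
  refine ⟨a * t + b * s, by positivity, v, hv, ?_⟩
  simp only [smul_smul, add_smul]

theorem sub_le_norm_smul_sub_smul (hu : ‖u‖ = 1) (hv : ‖v‖ = 1) (ht : 0 ≤ t) (hs : 0 ≤ s) :
    s - t ≤ ‖t • u - s • v‖ := by
  have := norm_sub_norm_le (s • v) (t • u)
  rwa [norm_smul, norm_smul, hu, hv, Real.norm_of_nonneg hs, Real.norm_of_nonneg ht,
    mul_one, mul_one, norm_sub_rev] at this

theorem mul_norm_sub_le_two_mul_norm_smul_sub_smul (hu : ‖u‖ = 1) (hv : ‖v‖ = 1) (ht : 0 ≤ t)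
    (hts : t ≤ s) : t * ‖u - v‖ ≤ 2 * ‖t • u - s • v‖ := by
  have hsv : ‖s • v - t • v‖ = s - t := by
    rw [← sub_smul, norm_smul, hv, Real.norm_of_nonneg (sub_nonneg.mpr hts), mul_one]
  calc t * ‖u - v‖ = ‖t • u - t • v‖ := by rw [← smul_sub, norm_smul, Real.norm_of_nonneg ht]
    _ ≤ ‖t • u - s • v‖ + ‖s • v - t • v‖ := norm_sub_le_norm_sub_add_norm_sub _ _ _
    _ ≤ 2 * ‖t • u - s • v‖ := by
        linarith [hsv ▸ sub_le_norm_smul_sub_smul hu hv ht (ht.trans hts)]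

theorem innerDist_cone_smul_le_of_le {k₀ : ℝ} (hL : ∀ u ∈ L, ‖u‖ = 1) (hk₀ : 0 ≤ k₀)
    (hLNE : ∀ u ∈ L, ∀ v ∈ L, innerDist L u v ≤ ENNReal.ofReal (k₀ * ‖u - v‖))
    (ht : 0 ≤ t) (hts : t ≤ s) (hu : u ∈ L) (hv : v ∈ L) :
    innerDist (cone L) (t • u) (s • v) ≤ ENNReal.ofReal ((2 * k₀ + 1) * ‖t • u - s • v‖) := by
  have hscale : innerDist (cone L) (t • u) (t • v) ≤ ENNReal.ofReal (t * (k₀ * ‖u - v‖)) := by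
    calc innerDist (cone L) (t • u) (t • v) ≤ ‖t‖₊ * innerDist L u v :=
          innerDist_image_le (lipschitzWith_smul t) (fun w hw ↦ smul_mem_cone ht hw)
            (ne_top_of_le_ne_top ENNReal.ofReal_ne_top (hLNE u hu v hv))
      _ ≤ ENNReal.ofReal t * ENNReal.ofReal (k₀ * ‖u - v‖) := by
          rw [← enorm_eq_nnnorm, Real.enorm_eq_ofReal ht]
          gcongr
          exact hLNE u hu v hv
      _ = ENNReal.ofReal (t * (k₀ * ‖u - v‖)) := (ENNReal.ofReal_mul ht).symm
  have hradial : innerDist (cone L) (t • v) (s • v) ≤ ENNReal.ofReal (s - t) := by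
    refine (innerDist_le_edist_of_segment_subset
      (segment_smul_subset_cone ht (ht.trans hts) hv)).trans_eq ?_
    rw [edist_dist, dist_eq_norm, ← sub_smul, norm_smul, hL v hv, mul_one,
      Real.norm_of_nonpos (by linarith), neg_sub]
  have hreal : t * (k₀ * ‖u - v‖) + (s - t) ≤ (2 * k₀ + 1) * ‖t • u - s • v‖ := by
    have h₁ := mul_norm_sub_le_two_mul_norm_smul_sub_smul (hL u hu) (hL v hv) ht hts
    have h₂ := sub_le_norm_smul_sub_smul (hL u hu) (hL v hv) ht (ht.trans hts)
    nlinarith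
  calc innerDist (cone L) (t • u) (s • v)
      ≤ innerDist (cone L) (t • u) (t • v) + innerDist (cone L) (t • v) (s • v) :=
        innerDist_triangle _ _ _ _
    _ ≤ ENNReal.ofReal (t * (k₀ * ‖u - v‖)) + ENNReal.ofReal (s - t) := add_le_add hscale hradial
    _ = ENNReal.ofReal (t * (k₀ * ‖u - v‖) + (s - t)) :=
        (ENNReal.ofReal_add (by positivity) (by linarith)).symm
    _ ≤ _ := ENNReal.ofReal_le_ofReal hreal

theorem innerDist_cone_le {k₀ : ℝ} (hL : ∀ u ∈ L, ‖u‖ = 1) (hk₀ : 0 ≤ k₀)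
    (hLNE : ∀ u ∈ L, ∀ v ∈ L, innerDist L u v ≤ ENNReal.ofReal (k₀ * ‖u - v‖))
    {x y : E} (hx : x ∈ cone L) (hy : y ∈ cone L) :
    innerDist (cone L) x y ≤ ENNReal.ofReal ((2 * k₀ + 1) * ‖x - y‖) := by
  obtain ⟨t, ht, u, hu, rfl⟩ := hx
  obtain ⟨s, hs, v, hv, rfl⟩ := hy
  rcases le_total t s with hts | hst
  · exact innerDist_cone_smul_le_of_le hL hk₀ hLNE ht hts hu hv
  · rw [innerDist_comm, norm_sub_rev]
    exact innerDist_cone_smul_le_of_le hL hk₀ hLNE hs hst hv hu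

end Cone

theorem stmt_17_general (n : ℕ) (L : Set (EuclideanSpace ℝ (Fin n)))
    (hL : L ⊆ Metric.sphere (0 : EuclideanSpace ℝ (Fin n)) 1)
    (hLNE : ∃ k₀ : ℝ, 0 < k₀ ∧
      ∀ u ∈ L, ∀ v ∈ L, innerDist L u v ≤ ENNReal.ofReal (k₀ * ‖u - v‖))
    (X : Set (EuclideanSpace ℝ (Fin n)))
    (hX : X = {p | ∃ t : ℝ, 0 ≤ t ∧ ∃ u ∈ L, p = t • u}) :
    ∃ k : ℝ, 0 < k ∧
      ∀ x ∈ X, ∀ y ∈ X, innerDist X x y ≤ ENNReal.ofReal (k * ‖x - y‖) := by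
  obtain ⟨k₀, hk₀, hLNE⟩ := hLNE
  subst hX
  exact ⟨2 * k₀ + 1, by positivity, fun x hx y hy ↦
    innerDist_cone_le (fun u hu ↦ by simpa using hL hu) hk₀.le hLNE hx hy⟩

theorem stmt_17 (n : ℕ) (L : Set (EuclideanSpace ℝ (Fin n)))
    (hL : L ⊆ Metric.sphere (0 : EuclideanSpace ℝ (Fin n)) 1)
    (hcomp : IsCompact L) (hconn : IsPathConnected L)
    (hLNE : ∃ k₀ : ℝ, 0 < k₀ ∧
      ∀ u ∈ L, ∀ v ∈ L, innerDist L u v ≤ ENNReal.ofReal (k₀ * ‖u - v‖))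
    (X : Set (EuclideanSpace ℝ (Fin n)))
    (hX : X = {p | ∃ t : ℝ, 0 ≤ t ∧ ∃ u ∈ L, p = t • u}) :
    ∃ k : ℝ, 0 < k ∧
      ∀ x ∈ X, ∀ y ∈ X, innerDist X x y ≤ ENNReal.ofReal (k * ‖x - y‖) :=
  stmt_17_general n L hL hLNE X hX
end
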